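/- Let a, b ≥ 2 and u = 1^a 2^b. For any letters m < s and any word v over positive integers, if v has no u-match, then none of the words m s m s v, s^{a+1} m s m s v, and s^{a+1} m s v (all letters taken from {m, s}) has a u-match; equivalently, no u-match in these words begins before the suffix v. -/

import Mathlib

/-- `red w` replaces each occurrence of the `i`-th smallest letter of `w` by `i`. -/
def red (w : List ℕ) : List ℕ :=
  w.map (fun x => (w.toFinset.filter (· < x)).card + 1)

/-- `w` has a `u`-match (starting at some position `i`): a factor of `w` of length `|u|`
whose reduction equals `red u` (which is `u` itself when `red u = u`). -/
def HasMatch (u w : List ℕ) : Prop :=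
  ∃ i, i + u.length ≤ w.length ∧ red ((w.drop i).take u.length) = red u

/-- The word `w` `u`-represents the labeled graph with vertex set `V` and adjacency `E`:
the letters occurring in `w` are exactly `V`, and two distinct vertices are adjacent
iff `w` restricted to these two letters has no `u`-match. -/
def Represents (u w : List ℕ) (V : Finset ℕ) (E : ℕ → ℕ → Prop) : Prop :=
  (∀ x, x ∈ w ↔ x ∈ V) ∧
  ∀ x ∈ V, ∀ y ∈ V, x ≠ y →
    (E x y ↔ ¬ HasMatch u (w.filter (fun z => z = x ∨ z = y)))


/-!
A `1^a 2^b`-match in a word over `{m, s}` is exactly a factor `m^a s^b`, and since `a ≥ 2` such a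
factor begins with `m m`. None of the three words has two consecutive `m`'s before `v` (every `m`
is followed by `s`), so prepending their prefixes to `v` creates no new occurrence of `m^a s^b`.
-/

open List

lemma red_replicate_append_replicate {a b m s : ℕ} (ha : a ≠ 0) (hb : b ≠ 0) (hms : m < s) :
    red (replicate a m ++ replicate b s) = replicate a 1 ++ replicate b 2 := by
  have hset : (replicate a m ++ replicate b s).toFinset = {m, s} := by
    rw [toFinset_append, toFinset_replicate_of_ne_zero ha, toFinset_replicate_of_ne_zero hb]
    rfl
  have hm : (({m, s} : Finset ℕ).filter (· < m)).card + 1 = 1 := by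
    simp [Finset.filter_insert, Finset.filter_singleton, hms.not_gt]
  have hs : (({m, s} : Finset ℕ).filter (· < s)).card + 1 = 2 := by
    simp [Finset.filter_insert, Finset.filter_singleton, hms]
  simp only [red, hset, map_append, map_replicate, hm, hs]

lemma eq_replicate_append_replicate_of_red_eq {a b m s : ℕ} (hb : b ≠ 0) (hms : m < s)
    {t : List ℕ} (ht : ∀ x ∈ t, x = m ∨ x = s)
    (hred : red t = replicate a 1 ++ replicate b 2) :
    t = replicate a m ++ replicate b s := by
  set f : ℕ → ℕ := fun x => (t.toFinset.filter (· < x)).card + 1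
  have hmap : t.map f = replicate a 1 ++ replicate b 2 := hred
  have hfm : f m = 1 := by
    have : t.toFinset.filter (· < m) = ∅ := Finset.filter_eq_empty_iff.mpr fun x hx => by
      rcases ht x (mem_toFinset.mp hx) with rfl | rfl <;> omega
    simp [f, this]
  have hfs : f s = 2 := by
    obtain ⟨x, hx, hfx⟩ : ∃ x ∈ t, f x = 2 := by
      rw [← mem_map, hmap]
      simp [hb]
    rcases ht x hx with rfl | rfl
    · omega
    · exact hfx
  calc t = (t.map f).map (fun k => if k = 1 then m else s) := by
        rw [map_map, map_congr_left (g := id) ?_, map_id]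
        intro x hx
        rcases ht x hx with rfl | rfl <;> simp [hfm, hfs]
    _ = replicate a m ++ replicate b s := by simp [hmap]

lemma hasMatch_iff_infix {a b m s : ℕ} (ha : a ≠ 0) (hb : b ≠ 0) (hms : m < s)
    {w : List ℕ} (hw : ∀ x ∈ w, x = m ∨ x = s) :
    HasMatch (replicate a 1 ++ replicate b 2) w ↔ replicate a m ++ replicate b s <:+: w := by
  have hu := red_replicate_append_replicate (m := 1) (s := 2) ha hb one_lt_two
  constructor
  · rintro ⟨i, -, hi⟩
    simp only [length_append, length_replicate] at hi
    have hfactor : (w.drop i).take (a + b) <:+: w :=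
      (take_prefix _ _).isInfix.trans (drop_suffix _ _).isInfix
    rwa [← eq_replicate_append_replicate_of_red_eq hb hms (fun x hx => hw x (hfactor.mem hx))
      (hi.trans hu)]
  · rintro ⟨p, q, rfl⟩
    refine ⟨p.length, by simp, ?_⟩
    rw [append_assoc, drop_left, take_left' (by simp), hu, red_replicate_append_replicate ha hb hms]

section Infix

variable {α : Type*} {m c : α} {y w : List α}

lemma not_infix_cons_of_ne (h : m ≠ c) (hw : ¬ m :: y <:+: w) : ¬ m :: y <:+: c :: w := by
  simp [infix_cons_iff, h, hw]

lemma not_infix_cons_cons_of_ne (h : m ≠ c) (hw : ¬ m :: m :: y <:+: c :: w) :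
    ¬ m :: m :: y <:+: m :: c :: w := by
  simp [infix_cons_iff, h, hw]

lemma not_infix_replicate_append (h : m ≠ c) (hw : ¬ m :: y <:+: w) (n : ℕ) :
    ¬ m :: y <:+: replicate n c ++ w := by
  induction n with
  | zero => simpa
  | succ n ih => exact not_infix_cons_of_ne h ih

end Infix

/-- for `u = 1^a 2^b` (`a, b ≥ 2`), letters `m < s` and a word `v` over
`{m, s}` with no `u`-match, none of `m s m s v`, `s^{a+1} m s m s v`, `s^{a+1} m s v`
has a `u`-match. -/
theorem key_lemma_1122 (a b m s : ℕ) (ha : 2 ≤ a) (hb : 2 ≤ b) (hms : m < s)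
    (v : List ℕ) (hv : ∀ x ∈ v, x = m ∨ x = s)
    (hnv : ¬ HasMatch (List.replicate a 1 ++ List.replicate b 2) v) :
    ¬ HasMatch (List.replicate a 1 ++ List.replicate b 2) ([m, s, m, s] ++ v) ∧
    ¬ HasMatch (List.replicate a 1 ++ List.replicate b 2)
        (List.replicate (a + 1) s ++ [m, s, m, s] ++ v) ∧
    ¬ HasMatch (List.replicate a 1 ++ List.replicate b 2)
        (List.replicate (a + 1) s ++ [m, s] ++ v) := by
  obtain ⟨c, rfl⟩ : ∃ c, a = c + 2 := ⟨a - 2, by omega⟩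
  have hmatch : ∀ p : List ℕ, (∀ x ∈ p, x = m ∨ x = s) →
      (HasMatch (replicate (c + 2) 1 ++ replicate b 2) (p ++ v) ↔
        m :: m :: (replicate c m ++ replicate b s) <:+: p ++ v) := fun p hp =>
    hasMatch_iff_infix (by omega) (by omega) hms (by grind)
  have hv' : ¬ m :: m :: (replicate c m ++ replicate b s) <:+: v :=
    (hasMatch_iff_infix (by omega) (by omega) hms hv).not.mp hnv
  have hmsv := not_infix_cons_cons_of_ne hms.ne (not_infix_cons_of_ne hms.ne hv')
  have hmsmsv := not_infix_cons_cons_of_ne hms.ne (not_infix_cons_of_ne hms.ne hmsv)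
  refine ⟨(hmatch _ (by simp)).not.mpr hmsmsv, (hmatch _ (by simp)).not.mpr ?_,
    (hmatch _ (by simp)).not.mpr ?_⟩
  · simpa using not_infix_replicate_append hms.ne hmsmsv (c + 3)
  · simpa using not_infix_replicate_append hms.ne hmsv (c + 3)
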